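/- Supermartingale construction in the stopping-time Chernoff bound: let (Ω, F, P) be a probability space with a filtration (F_n)_{n≥0}, let c > 0 and ε ∈ (0,1), and let (x_n)_{n≥1} and (y_n)_{n≥1} be real-valued processes such that for every n ≥ 1, x_n and y_n are F_n-measurable, x_n ∈ [0,c] and y_n ∈ [0,c] almost surely, and E[x_n | F_{n−1}] ≤ E[y_n | F_{n−1}] almost surely. Define φ_0 = 1 and φ_n = (1+ε)^{Σ_{t=1}^{n} x_t / c} · (1−ε)^{Σ_{t=1}^{n} y_t / c} for n ≥ 1. Then (φ_n)_{n≥0} is a nonnegative supermartingale with respect to (F_n)_{n≥0}: each φ_n is nonnegative and F_n-measurable, and E[φ_n | F_{n−1}] ≤ φ_{n−1} almost surely for every n ≥ 1. -/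

import Mathlib

/-!
Write `φₙ` as the product of the one-step factors `wₜ = (1 + ε) ^ (xₜ / c) * (1 - ε) ^ (yₜ / c)`;
then `E[φₙ | ℱₙ₋₁] = φₙ₋₁ E[wₙ | ℱₙ₋₁]` and it suffices that `E[wₙ | ℱₙ₋₁] ≤ 1`. Bernoulli's
inequality `(1 + s) ^ p ≤ 1 + p s` for `p ∈ [0, 1]` gives
`wₙ ≤ (1 + ε xₙ / c) (1 - ε yₙ / c) ≤ 1 + (ε / c) (xₙ - yₙ)`, and the conditional expectation of
the right-hand side is at most `1` because `E[xₙ | ℱₙ₋₁] ≤ E[yₙ | ℱₙ₋₁]`.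
-/

open MeasureTheory Finset

noncomputable def chernoffWeight (ε c a b : ℝ) : ℝ := (1 + ε) ^ (a / c) * (1 - ε) ^ (b / c)

section chernoffWeight

variable {ε c : ℝ}

@[simp]
lemma chernoffWeight_zero_zero : chernoffWeight ε c 0 0 = 1 := by simp [chernoffWeight]

lemma chernoffWeight_nonneg (hε : |ε| ≤ 1) (a b : ℝ) : 0 ≤ chernoffWeight ε c a b := by
  rw [abs_le] at hε
  exact mul_nonneg (Real.rpow_nonneg (by linarith) _) (Real.rpow_nonneg (by linarith) _)

lemma chernoffWeight_add_add (hε : |ε| < 1) (a b a' b' : ℝ) :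
    chernoffWeight ε c (a + a') (b + b') = chernoffWeight ε c a b * chernoffWeight ε c a' b' := by
  rw [abs_lt] at hε
  simp only [chernoffWeight, add_div, Real.rpow_add (by linarith : 0 < 1 + ε),
    Real.rpow_add (by linarith : 0 < 1 - ε)]
  ring

lemma chernoffWeight_le_one_add_mul_sub (hc : 0 < c) (hε : ε ∈ Set.Icc (0 : ℝ) 1) {a b : ℝ}
    (ha : a ∈ Set.Icc 0 c) (hb : b ∈ Set.Icc 0 c) :
    chernoffWeight ε c a b ≤ 1 + ε / c * (a - b) := by
  obtain ⟨hε0, hε1⟩ := hε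
  have hu : a / c ∈ Set.Icc (0 : ℝ) 1 := ⟨div_nonneg ha.1 hc.le, (div_le_one hc).2 ha.2⟩
  have hv : b / c ∈ Set.Icc (0 : ℝ) 1 := ⟨div_nonneg hb.1 hc.le, (div_le_one hc).2 hb.2⟩
  have hx := rpow_one_add_le_one_add_mul_self (by linarith : -1 ≤ ε) hu.1 hu.2
  have hy := rpow_one_add_le_one_add_mul_self (by linarith : -1 ≤ -ε) hv.1 hv.2
  rw [← sub_eq_add_neg] at hy
  calc chernoffWeight ε c a b ≤ (1 + a / c * ε) * (1 + b / c * -ε) :=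
        mul_le_mul hx hy (Real.rpow_nonneg (by linarith) _) (by nlinarith [hu.1])
    _ = 1 + ε / c * (a - b) - a / c * (b / c) * ε ^ 2 := by ring
    _ ≤ 1 + ε / c * (a - b) := by
        have := mul_nonneg (mul_nonneg hu.1 hv.1) (sq_nonneg ε)
        linarith

lemma chernoffWeight_mem_Icc (hc : 0 < c) (hε : ε ∈ Set.Icc (0 : ℝ) 1) {a b : ℝ}
    (ha : a ∈ Set.Icc 0 c) (hb : b ∈ Set.Icc 0 c) :
    chernoffWeight ε c a b ∈ Set.Icc 0 (1 + ε) := by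
  refine ⟨chernoffWeight_nonneg (abs_le.2 ⟨by linarith [hε.1], hε.2⟩) a b,
    (chernoffWeight_le_one_add_mul_sub hc hε ha hb).trans ?_⟩
  have : ε / c * (a - b) ≤ ε / c * c :=
    mul_le_mul_of_nonneg_left (by linarith [ha.2, hb.1]) (div_nonneg hε.1 hc.le)
  rw [div_mul_cancel₀ _ hc.ne'] at this
  linarith

lemma Measurable.chernoffWeight {Ω : Type*} {mΩ : MeasurableSpace Ω} {f g : Ω → ℝ}
    (hf : Measurable f) (hg : Measurable g) :
    Measurable fun ω => chernoffWeight ε c (f ω) (g ω) := by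
  unfold _root_.chernoffWeight
  fun_prop

end chernoffWeight

section CondExp

variable {Ω : Type*} {m m0 : MeasurableSpace Ω} {μ : Measure Ω}

lemma condExp_le_one_of_le_one_add_mul_sub [IsFiniteMeasure μ] (hm : m ≤ m0) {g u v : Ω → ℝ}
    {k : ℝ} (hk : 0 ≤ k) (hg : Integrable g μ) (hu : Integrable u μ) (hv : Integrable v μ)
    (hg_le : ∀ᵐ ω ∂μ, g ω ≤ 1 + k * (u ω - v ω)) (huv : μ[u|m] ≤ᵐ[μ] μ[v|m]) :
    μ[g|m] ≤ᵐ[μ] 1 := by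
  have hlin : μ[(fun _ => (1 : ℝ)) + k • (u - v)|m]
      =ᵐ[μ] (fun _ => 1) + k • (μ[u|m] - μ[v|m]) := by
    refine (condExp_add (integrable_const 1) ((hu.sub hv).smul k) m).trans ?_
    rw [condExp_const hm]
    exact (condExp_smul k (u - v) m).add_left.trans ((condExp_sub hu hv m).const_smul k).add_left
  filter_upwards [condExp_mono (m := m) hg ((integrable_const 1).add ((hu.sub hv).smul k)) hg_le,
    hlin, huv] with ω hmono hlin huv
  rw [hlin] at hmono
  simp only [Pi.add_apply, Pi.smul_apply, Pi.sub_apply, smul_eq_mul] at hmono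
  simpa using hmono.trans
    (add_le_of_nonpos_right (mul_nonpos_of_nonneg_of_nonpos hk (sub_nonpos.2 huv)))

lemma condExp_mul_le_of_condExp_le_one {f g : Ω → ℝ} (hf : StronglyMeasurable[m] f)
    (hf_nonneg : 0 ≤ᵐ[μ] f) (hfg : Integrable (f * g) μ) (hg : Integrable g μ)
    (hg_le : μ[g|m] ≤ᵐ[μ] 1) : μ[f * g|m] ≤ᵐ[μ] f := by
  filter_upwards [condExp_mul_of_stronglyMeasurable_left hf hfg hg, hf_nonneg, hg_le]
    with ω hpull hf0 hg1
  rw [hpull, Pi.mul_apply]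
  exact mul_le_of_le_one_right hf0 hg1

lemma ae_chernoffWeight_mem_Icc {ε c : ℝ} (hc : 0 < c) (hε : ε ∈ Set.Icc (0 : ℝ) 1) {u v : Ω → ℝ}
    (hu_mem : ∀ᵐ ω ∂μ, u ω ∈ Set.Icc 0 c) (hv_mem : ∀ᵐ ω ∂μ, v ω ∈ Set.Icc 0 c) :
    ∀ᵐ ω ∂μ, chernoffWeight ε c (u ω) (v ω) ∈ Set.Icc 0 (1 + ε) := by
  filter_upwards [hu_mem, hv_mem] with ω hu hv using chernoffWeight_mem_Icc hc hε hu hv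

lemma integrable_chernoffWeight [IsFiniteMeasure μ] {ε c : ℝ} (hc : 0 < c)
    (hε : ε ∈ Set.Icc (0 : ℝ) 1) {u v : Ω → ℝ} (hu : Measurable u) (hv : Measurable v)
    (hu_mem : ∀ᵐ ω ∂μ, u ω ∈ Set.Icc 0 c) (hv_mem : ∀ᵐ ω ∂μ, v ω ∈ Set.Icc 0 c) :
    Integrable (fun ω => chernoffWeight ε c (u ω) (v ω)) μ :=
  .of_mem_Icc 0 (1 + ε) (hu.chernoffWeight hv).aemeasurable
    (ae_chernoffWeight_mem_Icc hc hε hu_mem hv_mem)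

lemma condExp_chernoffWeight_le_one [IsFiniteMeasure μ] (hm : m ≤ m0) {ε c : ℝ} (hc : 0 < c)
    (hε : ε ∈ Set.Icc (0 : ℝ) 1) {u v : Ω → ℝ} (hu : Measurable u) (hv : Measurable v)
    (hu_mem : ∀ᵐ ω ∂μ, u ω ∈ Set.Icc 0 c) (hv_mem : ∀ᵐ ω ∂μ, v ω ∈ Set.Icc 0 c)
    (huv : μ[u|m] ≤ᵐ[μ] μ[v|m]) :
    μ[fun ω => chernoffWeight ε c (u ω) (v ω)|m] ≤ᵐ[μ] 1 := by
  refine condExp_le_one_of_le_one_add_mul_sub hm (div_nonneg hε.1 hc.le)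
    (integrable_chernoffWeight hc hε hu hv hu_mem hv_mem)
    (.of_mem_Icc 0 c hu.aemeasurable hu_mem) (.of_mem_Icc 0 c hv.aemeasurable hv_mem) ?_ huv
  filter_upwards [hu_mem, hv_mem] with ω hu hv
  exact chernoffWeight_le_one_add_mul_sub hc hε hu hv

end CondExp

noncomputable def chernoffProcess {Ω : Type*} (ε c : ℝ) (x y : ℕ → Ω → ℝ) (n : ℕ) (ω : Ω) : ℝ :=
  chernoffWeight ε c (∑ t ∈ Icc 1 n, x t ω) (∑ t ∈ Icc 1 n, y t ω)

section chernoffProcess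

variable {Ω : Type*} {m0 : MeasurableSpace Ω} {ε c : ℝ} {x y : ℕ → Ω → ℝ}

@[simp]
lemma chernoffProcess_zero : chernoffProcess ε c x y 0 = 1 := by
  ext ω
  simp [chernoffProcess]

lemma chernoffProcess_succ (hε : |ε| < 1) (n : ℕ) :
    chernoffProcess ε c x y (n + 1)
      = chernoffProcess ε c x y n * fun ω => chernoffWeight ε c (x (n + 1) ω) (y (n + 1) ω) := by
  ext ω
  simp only [chernoffProcess, Pi.mul_apply, sum_Icc_succ_top (Nat.le_add_left 1 n),
    chernoffWeight_add_add hε]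

lemma chernoffProcess_nonneg (hε : |ε| ≤ 1) (n : ℕ) (ω : Ω) : 0 ≤ chernoffProcess ε c x y n ω :=
  chernoffWeight_nonneg hε _ _

lemma Filtration.measurable_sum_Icc_one {ℱ : Filtration ℕ m0} {x : ℕ → Ω → ℝ}
    (hx : ∀ n, 1 ≤ n → Measurable[ℱ n] (x n)) (n : ℕ) :
    Measurable[ℱ n] fun ω => ∑ t ∈ Icc 1 n, x t ω :=
  Finset.measurable_sum _ fun t ht =>
    (hx t (mem_Icc.1 ht).1).mono (ℱ.mono (mem_Icc.1 ht).2) le_rfl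

variable {ℱ : Filtration ℕ m0} {μ : Measure Ω}

lemma measurable_chernoffProcess (hxm : ∀ n, 1 ≤ n → Measurable[ℱ n] (x n))
    (hym : ∀ n, 1 ≤ n → Measurable[ℱ n] (y n)) (n : ℕ) :
    Measurable[ℱ n] (chernoffProcess ε c x y n) :=
  (Filtration.measurable_sum_Icc_one hxm n).chernoffWeight
    (Filtration.measurable_sum_Icc_one hym n)

lemma integrable_chernoffProcess [IsFiniteMeasure μ] (hc : 0 < c) (hε : ε ∈ Set.Ico (0 : ℝ) 1)
    (hx : ∀ n, 1 ≤ n → Measurable (x n)) (hy : ∀ n, 1 ≤ n → Measurable (y n))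
    (hxb : ∀ n, 1 ≤ n → ∀ᵐ ω ∂μ, x n ω ∈ Set.Icc 0 c)
    (hyb : ∀ n, 1 ≤ n → ∀ᵐ ω ∂μ, y n ω ∈ Set.Icc 0 c) (n : ℕ) :
    Integrable (chernoffProcess ε c x y n) μ := by
  induction n with
  | zero =>
    rw [chernoffProcess_zero]
    exact integrable_const (1 : ℝ)
  | succ n ih =>
    rw [chernoffProcess_succ (abs_lt.2 ⟨by linarith [hε.1], hε.2⟩)]
    refine ih.mul_bdd (c := 1 + ε) ((hx _ le_add_self).chernoffWeight
      (hy _ le_add_self)).aestronglyMeasurable ?_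
    filter_upwards [ae_chernoffWeight_mem_Icc hc (Set.Ico_subset_Icc_self hε)
      (hxb _ le_add_self) (hyb _ le_add_self)] with ω hw
    rw [Real.norm_of_nonneg hw.1]
    exact hw.2

lemma condExp_chernoffProcess_succ_le [IsFiniteMeasure μ] (hc : 0 < c)
    (hε : ε ∈ Set.Ico (0 : ℝ) 1) (hxm : ∀ n, 1 ≤ n → Measurable[ℱ n] (x n))
    (hym : ∀ n, 1 ≤ n → Measurable[ℱ n] (y n)) (hxb : ∀ n, 1 ≤ n → ∀ᵐ ω ∂μ, x n ω ∈ Set.Icc 0 c)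
    (hyb : ∀ n, 1 ≤ n → ∀ᵐ ω ∂μ, y n ω ∈ Set.Icc 0 c)
    (hcond : ∀ n, 1 ≤ n → μ[x n|ℱ (n - 1)] ≤ᵐ[μ] μ[y n|ℱ (n - 1)]) (n : ℕ) :
    μ[chernoffProcess ε c x y (n + 1)|ℱ n] ≤ᵐ[μ] chernoffProcess ε c x y n := by
  have hε_abs : |ε| < 1 := abs_lt.2 ⟨by linarith [hε.1], hε.2⟩
  have hx : ∀ n, 1 ≤ n → Measurable (x n) := fun n hn => (hxm n hn).mono (ℱ.le n) le_rfl
  have hy : ∀ n, 1 ≤ n → Measurable (y n) := fun n hn => (hym n hn).mono (ℱ.le n) le_rfl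
  have hint := integrable_chernoffProcess hc hε hx hy hxb hyb (n + 1)
  rw [chernoffProcess_succ hε_abs] at hint ⊢
  exact condExp_mul_le_of_condExp_le_one (measurable_chernoffProcess hxm hym n).stronglyMeasurable
    (.of_forall (chernoffProcess_nonneg hε_abs.le n)) hint
    (integrable_chernoffWeight hc (Set.Ico_subset_Icc_self hε) (hx _ le_add_self) (hy _ le_add_self)
      (hxb _ le_add_self) (hyb _ le_add_self))
    (condExp_chernoffWeight_le_one (ℱ.le n) hc (Set.Ico_subset_Icc_self hε) (hx _ le_add_self)
      (hy _ le_add_self) (hxb _ le_add_self) (hyb _ le_add_self) (hcond (n + 1) le_add_self))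

end chernoffProcess

/-- Supermartingale construction in the stopping-time Chernoff bound. -/
theorem stmt10
    {Ω : Type*} {m0 : MeasurableSpace Ω}
    (P : Measure Ω) [IsProbabilityMeasure P]
    (ℱ : Filtration ℕ m0)
    (c : ℝ) (hc : 0 < c)
    (ε : ℝ) (hε : ε ∈ Set.Ioo (0 : ℝ) 1)
    (x y : ℕ → Ω → ℝ)
    (hxm : ∀ n, 1 ≤ n → Measurable[ℱ n] (x n))
    (hym : ∀ n, 1 ≤ n → Measurable[ℱ n] (y n))
    (hxb : ∀ n, 1 ≤ n → ∀ᵐ ω ∂P, x n ω ∈ Set.Icc 0 c)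
    (hyb : ∀ n, 1 ≤ n → ∀ᵐ ω ∂P, y n ω ∈ Set.Icc 0 c)
    (hcond : ∀ n, 1 ≤ n → ∀ᵐ ω ∂P, (P[x n|ℱ (n - 1)]) ω ≤ (P[y n|ℱ (n - 1)]) ω)
    (φ : ℕ → Ω → ℝ)
    (hφ0 : ∀ ω, φ 0 ω = 1)
    (hφ : ∀ n, 1 ≤ n → ∀ ω, φ n ω =
      (1 + ε) ^ ((∑ t ∈ Finset.Icc 1 n, x t ω) / c) *
        (1 - ε) ^ ((∑ t ∈ Finset.Icc 1 n, y t ω) / c)) :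
    (∀ n ω, 0 ≤ φ n ω) ∧
    (∀ n, Measurable[ℱ n] (φ n)) ∧
    (∀ n, 1 ≤ n → ∀ᵐ ω ∂P, (P[φ n|ℱ (n - 1)]) ω ≤ φ (n - 1) ω) := by
  have hφ_eq : φ = chernoffProcess ε c x y := by
    ext (_ | n) ω
    · simp [hφ0]
    · exact hφ _ n.succ_pos ω
  subst hφ_eq
  have hε' : ε ∈ Set.Ico (0 : ℝ) 1 := Set.Ioo_subset_Ico_self hε
  refine ⟨chernoffProcess_nonneg (abs_le.2 ⟨by linarith [hε.1], hε.2.le⟩),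
    measurable_chernoffProcess hxm hym, fun n hn => ?_⟩
  obtain ⟨n, rfl⟩ := Nat.exists_eq_add_of_le' hn
  exact condExp_chernoffProcess_succ_le hc hε' hxm hym hxb hyb hcond n
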